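/- Let d ≥ 5 be an integer. In ℂ[t₀,t₁,t₂,t₃], let h be homogeneous of degree d−4 involving only t₀,t₁, let G be homogeneous of degree d−1 involving only t₀,t₁,t₂, and let H be homogeneous of degree d−1. Set f = t₀⁴·h + t₂·G + t₃·H. Assume that the four partial derivatives of f do not all vanish at the point (0,1,0,0). Let Ḡ, H̄ ∈ ℂ[t₀,t₁] be the homogeneous degree-(d−1) polynomials obtained from G and H by substituting t₂ = t₃ = 0. Then t₀²·V_{d−2} + span_ℂ{t₀Ḡ, t₁Ḡ, t₀H̄, t₁H̄} = V_d. -/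

import Mathlib

open MvPolynomial

noncomputable section

/-- `V n` is the space of homogeneous polynomials of degree `n` in `ℂ[t₀,t₁]`. -/
abbrev V (n : ℕ) : Submodule ℂ (MvPolynomial (Fin 2) ℂ) :=
  MvPolynomial.homogeneousSubmodule (Fin 2) ℂ n

namespace Stmt6Aux

lemma deg2 (m : Fin 2 →₀ ℕ) : m.degree = m 0 + m 1 := by
  rw [Finsupp.degree_apply, Finset.sum_subset (Finset.subset_univ _)]
  · simp [Fin.sum_univ_two]
  · intro i _ hi
    simpa using Finsupp.notMem_support_iff.mp hi

lemma homog_coeff {p : MvPolynomial (Fin 2) ℂ} {n : ℕ} (hp : p.IsHomogeneous n)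
    {m : Fin 2 →₀ ℕ} (hm : p.coeff m ≠ 0) : m 0 + m 1 = n := by
  by_contra hne
  exact hm (hp.coeff_eq_zero (by rwa [deg2]))

lemma fin2_ext {m m' : Fin 2 →₀ ℕ} (h0 : m 0 = m' 0) (h1 : m 1 = m' 1) : m = m' := by
  ext i
  fin_cases i <;> assumption

lemma extract1 {n : ℕ} (p : MvPolynomial (Fin 2) ℂ) (hp : p.IsHomogeneous n)
    (hs : ∀ m ∈ p.support, 1 ≤ m 0) :
    ∃ q : MvPolynomial (Fin 2) ℂ, q.IsHomogeneous (n - 1) ∧ p = X 0 * q := by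
  refine ⟨p.support.sum fun m => monomial (m - Finsupp.single 0 1) (p.coeff m), ?_, ?_⟩
  · rw [← mem_homogeneousSubmodule]
    apply Submodule.sum_mem
    intro m hm
    rw [mem_homogeneousSubmodule]
    apply isHomogeneous_monomial
    have h1 := homog_coeff hp (mem_support_iff.mp hm)
    have h2 := hs m hm
    rw [deg2]
    simp [Finsupp.tsub_apply, Finsupp.single_apply]
    omega
  · conv_lhs => rw [← p.support_sum_monomial_coeff]
    rw [Finset.mul_sum]
    apply Finset.sum_congr rfl
    intro m hm
    have h2 := hs m hm
    have hm' : Finsupp.single 0 1 + (m - Finsupp.single 0 1) = m := by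
      apply fin2_ext <;> simp [Finsupp.single_apply, Finsupp.tsub_apply] <;> omega
    rw [X, monomial_mul, one_mul, hm']

lemma decomp {n : ℕ} (hn : 1 ≤ n) (p : MvPolynomial (Fin 2) ℂ) (hp : p.IsHomogeneous n) :
    ∃ q : MvPolynomial (Fin 2) ℂ, q.IsHomogeneous (n - 1) ∧
      p = C (p.coeff (Finsupp.single 1 n)) * X 1 ^ n + X 0 * q := by
  set c := p.coeff (Finsupp.single 1 n) with hc
  have hX1 : (C c * X 1 ^ n : MvPolynomial (Fin 2) ℂ).IsHomogeneous n :=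
    isHomogeneous_C_mul_X_pow c 1 n
  have hr : (p - C c * X 1 ^ n).IsHomogeneous n := hp.sub hX1
  have hsupp : ∀ m ∈ (p - C c * X 1 ^ n).support, 1 ≤ m 0 := by
    intro m hm
    rw [mem_support_iff] at hm
    by_contra h0
    have hm0 : m 0 = 0 := by omega
    have : m = Finsupp.single 1 n := by
      have := homog_coeff hr hm
      apply fin2_ext <;> simp [Finsupp.single_apply] <;> omega
    apply hm
    rw [this, coeff_sub, coeff_C_mul, X_pow_eq_monomial, coeff_monomial, if_pos rfl, mul_one,
      ← hc, sub_self]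
  obtain ⟨q, hq, he⟩ := extract1 _ hr hsupp
  exact ⟨q, hq, by rw [← he]; ring⟩

lemma eval01 {n : ℕ} (p : MvPolynomial (Fin 2) ℂ) (hp : p.IsHomogeneous n) :
    eval ![0, 1] p = p.coeff (Finsupp.single 1 n) := by
  rw [eval_eq']
  rw [Finset.sum_eq_single (Finsupp.single 1 n)]
  · by_cases hmem : Finsupp.single 1 n ∈ p.support
    · simp [Fin.prod_univ_two, Finsupp.single_apply]
    · rw [notMem_support_iff] at hmem
      simp [hmem]
  · intro m hm hne
    have h1 := homog_coeff hp (mem_support_iff.mp hm)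
    have h0 : 1 ≤ m 0 := by
      by_contra h0
      refine hne (fin2_ext ?_ ?_) <;> simp [Finsupp.single_apply] <;> omega
    rw [Fin.prod_univ_two]
    simp [Matrix.cons_val_zero, zero_pow (by omega : m 0 ≠ 0)]
  · intro hmem
    rw [notMem_support_iff] at hmem
    simp [hmem]

end Stmt6Aux

namespace Stmt6Aux

lemma key {d : ℕ} (hd : 2 ≤ d) (P : MvPolynomial (Fin 2) ℂ)
    (hP : P.IsHomogeneous (d - 1)) (hc : P.coeff (Finsupp.single 1 (d - 1)) ≠ 0)
    (S : Submodule ℂ (MvPolynomial (Fin 2) ℂ))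
    (h0 : X 0 * P ∈ S) (h1 : X 1 * P ∈ S)
    (hmap : ∀ q : MvPolynomial (Fin 2) ℂ, q.IsHomogeneous (d - 2) → X 0 ^ 2 * q ∈ S) :
    ∀ p : MvPolynomial (Fin 2) ℂ, p.IsHomogeneous d → p ∈ S := by
  set c := P.coeff (Finsupp.single 1 (d - 1)) with hcdef
  have hCmem : ∀ (a : ℂ) (x : MvPolynomial (Fin 2) ℂ), x ∈ S → C a * x ∈ S := by
    intro a x hx
    rw [← smul_eq_C_mul]
    exact S.smul_mem a hx
  have hCinv : ∀ (x : MvPolynomial (Fin 2) ℂ), C c * x ∈ S → x ∈ S := by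
    intro x hx
    have := hCmem c⁻¹ _ hx
    rwa [← mul_assoc, ← C_mul, inv_mul_cancel₀ hc, C_1, one_mul] at this
  obtain ⟨q, hq, hPe⟩ := decomp (by omega) P hP
  rw [show d - 1 - 1 = d - 2 from by omega] at hq
  -- step 1 : X 0 * X 1 ^ (d-1) ∈ S
  have s1 : (X 0 * X 1 ^ (d - 1) : MvPolynomial (Fin 2) ℂ) ∈ S := by
    apply hCinv
    have : C c * (X 0 * X 1 ^ (d - 1)) = X 0 * P - X 0 ^ 2 * q := by
      rw [hPe]; ring
    rw [this]
    exact S.sub_mem h0 (hmap q hq)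
  -- step 2 : X 1 ^ d ∈ S
  have hX1q : (X 1 * q : MvPolynomial (Fin 2) ℂ).IsHomogeneous (d - 1) := by
    rw [show d - 1 = 1 + (d - 2) from by omega]
    exact (isHomogeneous_X ℂ 1).mul hq
  obtain ⟨q', hq', hqe⟩ := decomp (by omega) (X 1 * q) hX1q
  rw [show d - 1 - 1 = d - 2 from by omega] at hq'
  have s2 : (X 1 ^ d : MvPolynomial (Fin 2) ℂ) ∈ S := by
    apply hCinv
    have hpow : (X 1 : MvPolynomial (Fin 2) ℂ) ^ d = X 1 * X 1 ^ (d - 1) := by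
      rw [← pow_succ']
      congr 1
      omega
    have : C c * (X 1 ^ d : MvPolynomial (Fin 2) ℂ) =
        X 1 * P - C ((X 1 * q).coeff (Finsupp.single 1 (d - 1))) * (X 0 * X 1 ^ (d - 1))
          - X 0 ^ 2 * q' := by
      rw [hpow, hPe]
      linear_combination (-(X 0) : MvPolynomial (Fin 2) ℂ) * hqe
    rw [this]
    exact S.sub_mem (S.sub_mem h1 (hCmem _ _ s1)) (hmap q' hq')
  -- step 3
  intro p hp
  obtain ⟨r, hr, hpe⟩ := decomp (by omega) p hp
  obtain ⟨r', hr', hre⟩ := decomp (by omega) r hr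
  rw [show d - 1 - 1 = d - 2 from by omega] at hr'
  rw [hpe, hre]
  have : X 0 * (C (r.coeff (Finsupp.single 1 (d - 1))) * X 1 ^ (d - 1) + X 0 * r')
      = C (r.coeff (Finsupp.single 1 (d - 1))) * (X 0 * X 1 ^ (d - 1)) + X 0 ^ 2 * r' := by
    ring
  rw [this]
  exact S.add_mem (hCmem _ _ s2)
    (S.add_mem (hCmem _ _ s1) (hmap r' hr'))

lemma evalbar (p : MvPolynomial (Fin 4) ℂ) :
    eval ![(0 : ℂ), 1] (aeval ![(X 0 : MvPolynomial (Fin 2) ℂ), X 1, 0, 0] p) =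
      eval ![(0 : ℂ), 1, 0, 0] p := by
  induction p using MvPolynomial.induction_on with
  | C a => simp
  | add p q hp hq => rw [map_add, map_add, map_add, hp, hq]
  | mul_X p i hp =>
      rw [map_mul, map_mul, hp, aeval_X, map_mul]
      fin_cases i <;> simp

lemma barhomog {n : ℕ} (p : MvPolynomial (Fin 4) ℂ) (hp : p.IsHomogeneous n) :
    (aeval ![(X 0 : MvPolynomial (Fin 2) ℂ), X 1, 0, 0] p).IsHomogeneous n := by
  have := hp.aeval ![(X 0 : MvPolynomial (Fin 2) ℂ), X 1, 0, 0] (n := 1) ?_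
  · simpa using this
  · intro i
    fin_cases i
    · exact isHomogeneous_X ℂ 0
    · exact isHomogeneous_X ℂ 1
    · exact isHomogeneous_zero _ _ _
    · exact isHomogeneous_zero _ _ _

end Stmt6Aux

open Stmt6Aux in
/-- Case 2 of Theorem 3.3: if `f = t₀⁴h + t₂G + t₃H` has nonvanishing gradient at
`(0,1,0,0)`, then `t₀²·V_{d-2} + <t₀Ḡ, t₁Ḡ, t₀H̄, t₁H̄> = V_d`, where `Ḡ`, `H̄`
are obtained from `G`, `H` by setting `t₂ = t₃ = 0`. -/
theorem statement6 (d : ℕ) (hd : 5 ≤ d)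
    (h G H f : MvPolynomial (Fin 4) ℂ)
    (hhdeg : h.IsHomogeneous (d - 4))
    (hhsupp : h ∈ MvPolynomial.supported ℂ ({0, 1} : Set (Fin 4)))
    (hGdeg : G.IsHomogeneous (d - 1))
    (hGsupp : G ∈ MvPolynomial.supported ℂ ({0, 1, 2} : Set (Fin 4)))
    (hHdeg : H.IsHomogeneous (d - 1))
    (hf : f = X 0 ^ 4 * h + X 2 * G + X 3 * H)
    (hsm : ¬ ∀ i : Fin 4, MvPolynomial.eval ![0, 1, 0, 0] (pderiv i f) = 0)
    (Gbar Hbar : MvPolynomial (Fin 2) ℂ)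
    (hGbar : Gbar = MvPolynomial.aeval ![X 0, X 1, 0, 0] G)
    (hHbar : Hbar = MvPolynomial.aeval ![X 0, X 1, 0, 0] H) :
    (V (d - 2)).map (LinearMap.mulLeft ℂ ((X 0 : MvPolynomial (Fin 2) ℂ) ^ 2)) ⊔
        Submodule.span ℂ {X 0 * Gbar, X 1 * Gbar, X 0 * Hbar, X 1 * Hbar} = V d := by
  have hGb : Gbar.IsHomogeneous (d - 1) := hGbar ▸ barhomog G hGdeg
  have hHb : Hbar.IsHomogeneous (d - 1) := hHbar ▸ barhomog H hHdeg
  -- nonvanishing of one of the leading coefficients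
  have hne : Gbar.coeff (Finsupp.single 1 (d - 1)) ≠ 0 ∨
      Hbar.coeff (Finsupp.single 1 (d - 1)) ≠ 0 := by
    have e0 : eval ![(0:ℂ), 1, 0, 0] (pderiv 0 f) = 0 := by
      simp [hf, pderiv_mul, pderiv_pow, pderiv_X]
    have e1 : eval ![(0:ℂ), 1, 0, 0] (pderiv 1 f) = 0 := by
      simp [hf, pderiv_mul, pderiv_pow, pderiv_X]
    have e2 : eval ![(0:ℂ), 1, 0, 0] (pderiv 2 f) = eval ![(0:ℂ),1,0,0] G := by
      simp [hf, pderiv_mul, pderiv_pow, pderiv_X]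
    have e3 : eval ![(0:ℂ), 1, 0, 0] (pderiv 3 f) = eval ![(0:ℂ),1,0,0] H := by
      simp [hf, pderiv_mul, pderiv_pow, pderiv_X]
    obtain ⟨i, hi⟩ := not_forall.mp hsm
    fin_cases i
    · exact absurd e0 hi
    · exact absurd e1 hi
    · refine Or.inl ?_
      rw [← eval01 Gbar hGb, hGbar, evalbar]
      exact fun hh => hi (e2.trans hh)
    · refine Or.inr ?_
      rw [← eval01 Hbar hHb, hHbar, evalbar]
      exact fun hh => hi (e3.trans hh)
  apply le_antisymm
  · apply sup_le
    · rintro x ⟨q, hq, rfl⟩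
      simp only [LinearMap.mulLeft_apply]
      have hq' : q.IsHomogeneous (d - 2) := hq
      have h2 := (isHomogeneous_X_pow (R := ℂ) (0 : Fin 2) 2).mul hq'
      rw [show 2 + (d - 2) = d from by omega] at h2
      exact h2
    · rw [Submodule.span_le]
      rintro x hx
      simp only [Set.mem_insert_iff, Set.mem_singleton_iff] at hx
      have hgen : ∀ (i : Fin 2) (P : MvPolynomial (Fin 2) ℂ), P.IsHomogeneous (d - 1) →
          (X i * P : MvPolynomial (Fin 2) ℂ) ∈ V d := by
        intro i P hP
        have h2 := (isHomogeneous_X ℂ i).mul hP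
        rw [show 1 + (d - 1) = d from by omega] at h2
        exact h2
      rcases hx with rfl | rfl | rfl | rfl
      · exact hgen 0 Gbar hGb
      · exact hgen 1 Gbar hGb
      · exact hgen 0 Hbar hHb
      · exact hgen 1 Hbar hHb
  · intro p hp
    rw [mem_homogeneousSubmodule] at hp
    set S := (V (d - 2)).map (LinearMap.mulLeft ℂ ((X 0 : MvPolynomial (Fin 2) ℂ) ^ 2)) ⊔
        Submodule.span ℂ {X 0 * Gbar, X 1 * Gbar, X 0 * Hbar, X 1 * Hbar} with hS
    have hmap : ∀ q : MvPolynomial (Fin 2) ℂ, q.IsHomogeneous (d - 2) → X 0 ^ 2 * q ∈ S := by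
      intro q hq
      exact Submodule.mem_sup_left ⟨q, hq, by simp⟩
    rcases hne with hc | hc
    · exact key (by omega) Gbar hGb hc S
        (Submodule.mem_sup_right (Submodule.subset_span (by simp)))
        (Submodule.mem_sup_right (Submodule.subset_span (by simp))) hmap p hp
    · exact key (by omega) Hbar hHb hc S
        (Submodule.mem_sup_right (Submodule.subset_span (by simp)))
        (Submodule.mem_sup_right (Submodule.subset_span (by simp))) hmap p hp
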